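/- Define H_{i,n}(s) := (1 - F_{i,n}(s)) ∏_{j≠i, 0≤j≤n-1} F_{j,n}(0) for fractional linear F_k with means m_k. Then for any 0 ≤ i ≤ n-1 and s ∈ [0,1): H_{i,n}(s) = [a_i / (a_n(1-s)^{-1} + b_n - b_i)] · [(a_n + b_n - b_i)/(a_n + b_n - b_{i+1})] · (a_n / b_{n+1}), where a_k = e^{-S_k}, b_m = ∑_{k=0}^{m-1} e^{-S_k}, S_k = ∑_{j≤k} log m_j. -/

import Mathlib

/-- The fractional linear (geometric) probability generating function with mean `exp x`. -/
noncomputable def geomPGF (x s : ℝ) : ℝ := (1 + Real.exp x * (1 - s))⁻¹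

/-- The associated random walk: `walk X k = log m_1 + ... + log m_k` where `X j = log m_j`. -/
noncomputable def walk (X : ℕ → ℝ) (k : ℕ) : ℝ := ∑ j ∈ Finset.range k, X (j + 1)

/-- Forward composition `F_{i,n}(s) = F_{i+1}(F_{i+2}(... F_n(s) ...))`, with `F_{n,n}(s) = s`,
where `F_k` is the fractional linear pgf with mean `m_k = exp (X k)`. -/
noncomputable def Fcomp (X : ℕ → ℝ) (i n : ℕ) (s : ℝ) : ℝ :=
  (List.range (n - i)).foldr (fun k t => geomPGF (X (i + k + 1)) t) s

/-- `a_k = e^{-S_k}`. -/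
noncomputable def aRW (X : ℕ → ℝ) (k : ℕ) : ℝ := Real.exp (-(walk X k))

/-- `b_m = ∑_{k=0}^{m-1} e^{-S_k}` (so `b_0 = 0`). -/
noncomputable def bRW (X : ℕ → ℝ) (m : ℕ) : ℝ := ∑ k ∈ Finset.range m, Real.exp (-(walk X k))

/-- `H_{i,n}(s) := (1 - F_{i,n}(s)) ∏_{j ≠ i, 0 ≤ j ≤ n-1} F_{j,n}(0)`. -/
noncomputable def Hfun (X : ℕ → ℝ) (i n : ℕ) (s : ℝ) : ℝ :=
  (1 - Fcomp X i n s) * ∏ j ∈ (Finset.range n).erase i, Fcomp X j n 0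

/-! The composition of fractional linear maps is again fractional linear: with
`D_i(s) = a_n (1-s)⁻¹ + b_n - b_i` one has `F_{i,n}(s) = 1 - a_i / D_i(s)`, because applying
`F_i` to `1 - a_{i+1} / D_{i+1}(s)` multiplies `a_{i+1}` by `m_i`, giving `a_i`, and adds it to
the denominator, giving `D_i(s)`. At `s = 0` this reads `F_{j,n}(0) = D_{j+1}(0) / D_j(0)`, so the
product over `j < n` telescopes to `D_n(0) / D_0(0) = a_n / b_{n+1}`. -/

theorem Finset.prod_range_div_of_ne_zero {G₀ : Type*} [CommGroupWithZero G₀] (f : ℕ → G₀)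
    {n : ℕ} (hf : ∀ k ≤ n, f k ≠ 0) : ∏ k ∈ Finset.range n, f (k + 1) / f k = f n / f 0 := by
  refine Finset.prod_range_induction _ (fun m => f m / f 0) (div_self (hf 0 n.zero_le)) n ?_
  intro k hk
  rw [mul_comm, div_mul_div_cancel₀ (hf k hk.le)]

theorem geomPGF_one_sub_div (x a D : ℝ) (hD : D ≠ 0) (hDa : D + Real.exp x * a ≠ 0) :
    geomPGF x (1 - a / D) = 1 - Real.exp x * a / (D + Real.exp x * a) := by
  have : 1 + Real.exp x * (1 - (1 - a / D)) = (D + Real.exp x * a) / D := by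
    rw [sub_sub_cancel]
    field_simp
  rw [geomPGF, this, inv_div, eq_sub_iff_add_eq, ← add_div, div_self hDa]

lemma walk_succ (X : ℕ → ℝ) (k : ℕ) : walk X (k + 1) = walk X k + X (k + 1) :=
  Finset.sum_range_succ _ _

lemma aRW_pos (X : ℕ → ℝ) (k : ℕ) : 0 < aRW X k := Real.exp_pos _

lemma exp_mul_aRW_succ (X : ℕ → ℝ) (k : ℕ) :
    Real.exp (X (k + 1)) * aRW X (k + 1) = aRW X k := by
  rw [aRW, aRW, ← Real.exp_add, walk_succ]
  ring_nf

lemma bRW_zero (X : ℕ → ℝ) : bRW X 0 = 0 := Finset.sum_range_zero _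

lemma bRW_succ (X : ℕ → ℝ) (m : ℕ) : bRW X (m + 1) = bRW X m + aRW X m :=
  Finset.sum_range_succ _ _

lemma bRW_mono (X : ℕ → ℝ) : Monotone (bRW X) := fun _ _ h =>
  Finset.sum_le_sum_of_subset_of_nonneg (Finset.range_subset_range.2 h)
    (fun _ _ _ => (Real.exp_pos _).le)

lemma Fcomp_self (X : ℕ → ℝ) (n : ℕ) (s : ℝ) : Fcomp X n n s = s := by
  simp [Fcomp]

lemma Fcomp_of_lt (X : ℕ → ℝ) {i n : ℕ} (h : i < n) (s : ℝ) :
    Fcomp X i n s = geomPGF (X (i + 1)) (Fcomp X (i + 1) n s) := by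
  obtain ⟨m, hm⟩ : ∃ m, n - i = m + 1 := ⟨n - i - 1, by omega⟩
  rw [Fcomp, Fcomp, hm, show n - (i + 1) = m by omega, List.range_succ_eq_map, List.foldr_cons,
    List.foldr_map]
  simp only [Nat.add_zero, Nat.succ_eq_add_one, ← add_assoc, add_right_comm i]

section Denominator

variable (X : ℕ → ℝ) (n : ℕ) (s : ℝ)

noncomputable def denomRW (i : ℕ) : ℝ := aRW X n * (1 - s)⁻¹ + bRW X n - bRW X i

lemma denomRW_eq_succ_add (i : ℕ) : denomRW X n s i = denomRW X n s (i + 1) + aRW X i := by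
  rw [denomRW, denomRW, bRW_succ]
  ring

lemma denomRW_zero_eq (i : ℕ) : denomRW X n 0 i = aRW X n + bRW X n - bRW X i := by
  simp [denomRW]

variable {X n s}

lemma denomRW_pos (hs : s < 1) {i : ℕ} (hi : i ≤ n) : 0 < denomRW X n s i := by
  have : 0 < aRW X n * (1 - s)⁻¹ := mul_pos (aRW_pos X n) (inv_pos.2 (by linarith))
  have := bRW_mono X hi
  rw [denomRW]
  linarith

lemma Fcomp_eq_one_sub_div (hs : s < 1) {i : ℕ} (hi : i ≤ n) :
    Fcomp X i n s = 1 - aRW X i / denomRW X n s i := by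
  induction hi using Nat.decreasingInduction with
  | self =>
    rw [Fcomp_self, denomRW, add_sub_cancel_right, div_mul_eq_div_div, div_self (aRW_pos X n).ne',
      one_div, inv_inv, sub_sub_cancel]
  | of_succ k hk ih =>
    have hD := denomRW_pos (X := X) hs hk.le
    rw [denomRW_eq_succ_add X n s k, ← exp_mul_aRW_succ] at hD ⊢
    rw [Fcomp_of_lt X hk, ih]
    exact geomPGF_one_sub_div _ _ _ (denomRW_pos hs hk).ne' hD.ne'

lemma Fcomp_zero_eq_div {i : ℕ} (hi : i ≤ n) :
    Fcomp X i n 0 = denomRW X n 0 (i + 1) / denomRW X n 0 i := by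
  have hD := denomRW_pos (X := X) zero_lt_one hi
  rw [Fcomp_eq_one_sub_div zero_lt_one hi, eq_div_iff hD.ne', sub_mul, one_mul,
    div_mul_cancel₀ _ hD.ne', denomRW_eq_succ_add X n 0 i, add_sub_cancel_right]

lemma prod_Fcomp_zero : ∏ j ∈ Finset.range n, Fcomp X j n 0 = aRW X n / bRW X (n + 1) := by
  rw [Finset.prod_congr rfl fun j hj => Fcomp_zero_eq_div (Finset.mem_range.1 hj).le,
    Finset.prod_range_div_of_ne_zero _ fun k hk => (denomRW_pos zero_lt_one hk).ne',
    denomRW_zero_eq, denomRW_zero_eq, bRW_zero, bRW_succ]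
  ring_nf

end Denominator

/-- Lemma 1 of the paper: for `0 ≤ i ≤ n-1` and `s ∈ [0,1)`,
`H_{i,n}(s) = [a_i/(a_n (1-s)^{-1} + b_n - b_i)]·[(a_n+b_n-b_i)/(a_n+b_n-b_{i+1})]·(a_n/b_{n+1})`. -/
theorem Hfun_eq (X : ℕ → ℝ) (i n : ℕ) (hin : i < n) (s : ℝ)
    (hs : s ∈ Set.Ico (0 : ℝ) 1) :
    Hfun X i n s =
      (aRW X i / (aRW X n * (1 - s)⁻¹ + bRW X n - bRW X i)) *
        ((aRW X n + bRW X n - bRW X i) / (aRW X n + bRW X n - bRW X (i + 1))) *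
        (aRW X n / bRW X (n + 1)) := by
  have hFi : Fcomp X i n 0 ≠ 0 := by
    rw [Fcomp_zero_eq_div hin.le]
    exact div_ne_zero (denomRW_pos zero_lt_one hin).ne' (denomRW_pos zero_lt_one hin.le).ne'
  have herase : ∏ j ∈ (Finset.range n).erase i, Fcomp X j n 0 =
      (aRW X n / bRW X (n + 1)) / Fcomp X i n 0 := by
    rw [← prod_Fcomp_zero, ← Finset.prod_erase_mul _ _ (Finset.mem_range.2 hin),
      mul_div_cancel_right₀ _ hFi]
  rw [Hfun, herase, Fcomp_eq_one_sub_div hs.2 hin.le, Fcomp_zero_eq_div hin.le, denomRW,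
    denomRW_zero_eq, denomRW_zero_eq, sub_sub_cancel, div_div_eq_mul_div]
  ring
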